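/- Let A be a finite-dimensional perm algebra, R ∈ A ⊗ A a symmetric solution of the S-equation, and define Δ : A → A ⊗ A by Δ(a) = (κl(a) ⊗ id + id ⊗ κl(a) − id ⊗ κr(a))(R), where κl(a)(x) = ax, κr(a)(x) = xa. Then the induced perm algebra structure on A* (via Δ*) is given by b1 b2 = κr*(R#(b2))(b1) + κr*(R#(b1))(b2) − κl*(R#(b1))(b2), and moreover R# : A* → A is a morphism of perm algebras; if R is nondegenerate, R# is an isomorphism of perm algebras. -/

import Mathlib

open TensorProduct

/-- For `R = Σᵢ aᵢ ⊗ āᵢ ∈ A ⊗ A`, the element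
`P(R) = R₁₃R₁₂ − R₁₃R₂₃ + R₂₃R₁₂ − R₁₂R₂₃ ∈ A ⊗ A ⊗ A`; the S-equation is `P(R) = 0`. -/
noncomputable def sTensor {k A : Type*} [Field k] [AddCommGroup A] [Module k A]
    (mul : A →ₗ[k] A →ₗ[k] A) (R : A ⊗[k] A) : A ⊗[k] (A ⊗[k] A) :=
  let M : A ⊗[k] A →ₗ[k] A := TensorProduct.lift mul
  let X : (A ⊗[k] A) ⊗[k] (A ⊗[k] A) := R ⊗ₜ[k] R
  let Y := (TensorProduct.tensorTensorTensorComm k A A A A) X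
  (TensorProduct.map M LinearMap.id)
      ((TensorProduct.map LinearMap.id (TensorProduct.comm k A A).toLinearMap) Y)
  - (TensorProduct.assoc k A A A) ((TensorProduct.map LinearMap.id M) Y)
  + (TensorProduct.map LinearMap.id (TensorProduct.map M LinearMap.id))
      ((TensorProduct.map LinearMap.id (TensorProduct.assoc k A A A).symm.toLinearMap)
        ((TensorProduct.assoc k A A (A ⊗[k] A))
          ((TensorProduct.tensorTensorTensorComm k A A A A)
            ((TensorProduct.comm k (A ⊗[k] A) (A ⊗[k] A)) X))))
  - (TensorProduct.map LinearMap.id (TensorProduct.map M LinearMap.id))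
      ((TensorProduct.map LinearMap.id (TensorProduct.assoc k A A A).symm.toLinearMap)
        ((TensorProduct.assoc k A A (A ⊗[k] A)) X))

/-- The linear map `R♯ : A* → A` attached to `R ∈ A ⊗ A`, determined by
`⟨R♯(u₁), u₂⟩ = ⟨R, u₁ ⊗ u₂⟩`. -/
noncomputable def rSharp {k A : Type*} [Field k] [AddCommGroup A] [Module k A]
    (R : A ⊗[k] A) : Module.Dual k A → A :=
  fun u => (TensorProduct.lid k A) ((TensorProduct.map u LinearMap.id) R)

/-- The coboundary comultiplication
`Δ(a) = (κl(a) ⊗ id + id ⊗ κl(a) − id ⊗ κr(a))(R)`. -/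
noncomputable def coboundaryDelta {k A : Type*} [Field k] [AddCommGroup A] [Module k A]
    (mul : A →ₗ[k] A →ₗ[k] A) (R : A ⊗[k] A) (a : A) : A ⊗[k] A :=
  (TensorProduct.map (mul a) LinearMap.id) R + (TensorProduct.map LinearMap.id (mul a)) R -
    (TensorProduct.map LinearMap.id (mul.flip a)) R

/-! Everything is a pairing computation on pure tensors. Pairing `Δ(a)` with `b₁ ⊗ b₂` gives
the formula for `b₁b₂` directly. Writing the S-expression as a linear function of `R ⊗ R` and
contracting its first two legs against `b₁ ⊗ b₂` yields, for symmetric `R`,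
`R♯(b₁b₂) − R♯(b₁)R♯(b₂)`, so the S-equation makes `R♯` multiplicative. Bijectivity of an
injective `R♯` is a dimension count, `dim A* = dim A`. -/

section RSharp

variable {k A : Type*} [Field k] [AddCommGroup A] [Module k A]

@[simp] lemma rSharp_tmul (x y : A) (u : Module.Dual k A) :
    rSharp (x ⊗ₜ[k] y) u = u x • y := by
  simp [rSharp]

@[simp] lemma rSharp_zero (u : Module.Dual k A) : rSharp (0 : A ⊗[k] A) u = 0 := by
  simp [rSharp]

@[simp] lemma rSharp_add (S T : A ⊗[k] A) (u : Module.Dual k A) :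
    rSharp (S + T) u = rSharp S u + rSharp T u := by
  simp [rSharp]

noncomputable def rSharpₗ (R : A ⊗[k] A) : Module.Dual k A →ₗ[k] A where
  toFun := rSharp R
  map_add' u v := by simp [rSharp, TensorProduct.map_add_left]
  map_smul' c u := by simp [rSharp, TensorProduct.map_smul_left]

@[simp] lemma rSharp_apply_add (R : A ⊗[k] A) (u v : Module.Dual k A) :
    rSharp R (u + v) = rSharp R u + rSharp R v :=
  map_add (rSharpₗ R) u v

@[simp] lemma rSharp_apply_sub (R : A ⊗[k] A) (u v : Module.Dual k A) :
    rSharp R (u - v) = rSharp R u - rSharp R v :=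
  map_sub (rSharpₗ R) u v

@[simp] lemma rSharp_apply_zero (R : A ⊗[k] A) : rSharp R (0 : Module.Dual k A) = 0 :=
  map_zero (rSharpₗ R)

end RSharp

section Pairing

variable {k A : Type*} [Field k] [AddCommGroup A] [Module k A]
variable (mul : A →ₗ[k] A →ₗ[k] A) (b1 b2 : Module.Dual k A)

lemma lid_map_coboundaryDelta (S : A ⊗[k] A) (a : A) :
    TensorProduct.lid k k (TensorProduct.map b1 b2 (coboundaryDelta mul S a)) =
      ((mul.flip (rSharp (TensorProduct.comm k A A S) b2)).dualMap b1 +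
        (mul.flip (rSharp S b1)).dualMap b2 - (mul (rSharp S b1)).dualMap b2) a := by
  induction S using TensorProduct.induction_on with
  | zero => simp [coboundaryDelta]
  | add S S' hS hS' =>
    simp only [coboundaryDelta, map_add, map_sub, rSharp_add, LinearMap.add_apply,
      LinearMap.sub_apply, LinearMap.dualMap_apply] at hS hS' ⊢
    linear_combination hS + hS'
  | tmul x y => simp [coboundaryDelta, mul_comm]

noncomputable def sTensorLin :
    (A ⊗[k] A) ⊗[k] (A ⊗[k] A) →ₗ[k] A ⊗[k] (A ⊗[k] A) :=
  let M : A ⊗[k] A →ₗ[k] A := TensorProduct.lift mul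
  let Y := (TensorProduct.tensorTensorTensorComm k A A A A).toLinearMap
  let N := (TensorProduct.map LinearMap.id (TensorProduct.map M LinearMap.id)) ∘ₗ
      (TensorProduct.map LinearMap.id (TensorProduct.assoc k A A A).symm.toLinearMap) ∘ₗ
      (TensorProduct.assoc k A A (A ⊗[k] A)).toLinearMap
  (TensorProduct.map M LinearMap.id) ∘ₗ
      (TensorProduct.map LinearMap.id (TensorProduct.comm k A A).toLinearMap) ∘ₗ Y
    - (TensorProduct.assoc k A A A).toLinearMap ∘ₗ (TensorProduct.map LinearMap.id M) ∘ₗ Y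
    + N ∘ₗ Y ∘ₗ (TensorProduct.comm k (A ⊗[k] A) (A ⊗[k] A)).toLinearMap
    - N

lemma sTensor_eq_sTensorLin (R : A ⊗[k] A) : sTensor mul R = sTensorLin mul (R ⊗ₜ R) := rfl

noncomputable def contract₁₂ : A ⊗[k] (A ⊗[k] A) →ₗ[k] A :=
  (TensorProduct.lid k A).toLinearMap ∘ₗ
    TensorProduct.map b1 ((TensorProduct.lid k A).toLinearMap ∘ₗ TensorProduct.map b2 LinearMap.id)

@[simp] lemma contract₁₂_tmul (p q s : A) :
    contract₁₂ b1 b2 (p ⊗ₜ[k] (q ⊗ₜ[k] s)) = b1 p • b2 q • s := by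
  simp [contract₁₂, smul_comm (b1 p)]

lemma contract₁₂_sTensorLin (S T : A ⊗[k] A) :
    contract₁₂ b1 b2 (sTensorLin mul (S ⊗ₜ T)) =
      rSharp S ((mul.flip (rSharp (TensorProduct.comm k A A T) b2)).dualMap b1)
      - mul (rSharp S b1) (rSharp T b2)
      + rSharp S ((mul.flip (rSharp T b1)).dualMap b2)
      - rSharp T ((mul (rSharp S b1)).dualMap b2) := by
  induction S using TensorProduct.induction_on with
  | zero => simp [LinearMap.dualMap_apply']
  | add S S' hS hS' =>
    rw [TensorProduct.add_tmul, map_add, map_add, hS, hS']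
    simp only [rSharp_add, map_add, LinearMap.add_apply, LinearMap.dualMap_apply',
      LinearMap.comp_add, rSharp_apply_add]
    abel
  | tmul x y =>
    induction T using TensorProduct.induction_on with
    | zero => simp [LinearMap.dualMap_apply']
    | add T T' hT hT' =>
      rw [TensorProduct.tmul_add, map_add, map_add, hT, hT']
      simp only [rSharp_add, map_add, LinearMap.dualMap_apply', LinearMap.comp_add,
        rSharp_apply_add]
      abel
    | tmul z w => simp [sTensorLin, smul_smul, mul_comm]

end Pairing

theorem rSharp_dualMul_eq_mul_rSharp {k A : Type*} [Field k] [AddCommGroup A] [Module k A]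
    (mul : A →ₗ[k] A →ₗ[k] A) {R : A ⊗[k] A} (hsym : TensorProduct.comm k A A R = R)
    (hS : sTensor mul R = 0) (b1 b2 : Module.Dual k A) :
    rSharp R ((mul.flip (rSharp R b2)).dualMap b1 + (mul.flip (rSharp R b1)).dualMap b2 -
        (mul (rSharp R b1)).dualMap b2) =
      mul (rSharp R b1) (rSharp R b2) := by
  have h := contract₁₂_sTensorLin mul b1 b2 R R
  rw [← sTensor_eq_sTensorLin, hS, map_zero, hsym] at h
  rw [rSharp_apply_sub, rSharp_apply_add]
  linear_combination (norm := abel) -h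

theorem coboundary_bialgebra_structure_general {k A : Type*} [Field k] [AddCommGroup A] [Module k A]
    [FiniteDimensional k A]
    (mul : A →ₗ[k] A →ₗ[k] A)
    (R : A ⊗[k] A)
    (hsym : (TensorProduct.comm k A A) R = R)
    (hS : sTensor mul R = 0) :
    -- (i) the perm structure on A* induced by Δ is given by the stated formula
    (∀ (b1 b2 : Module.Dual k A) (a : A),
      (TensorProduct.lid k k) ((TensorProduct.map b1 b2) (coboundaryDelta mul R a)) =
        ((mul.flip (rSharp R b2)).dualMap b1 + (mul.flip (rSharp R b1)).dualMap b2 -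
          (mul (rSharp R b1)).dualMap b2) a) ∧
    -- (ii) R♯ is a morphism of perm algebras
    (∀ b1 b2 : Module.Dual k A,
      rSharp R ((mul.flip (rSharp R b2)).dualMap b1 + (mul.flip (rSharp R b1)).dualMap b2 -
          (mul (rSharp R b1)).dualMap b2) =
        mul (rSharp R b1) (rSharp R b2)) ∧
    -- and if R is nondegenerate, R♯ is an isomorphism of perm algebras
    ((∀ u : Module.Dual k A, rSharp R u = 0 → u = 0) → Function.Bijective (rSharp R)) := by
  refine ⟨fun b1 b2 a => ?_, rSharp_dualMul_eq_mul_rSharp mul hsym hS, fun hnondeg => ?_⟩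
  · simpa only [hsym] using lid_map_coboundaryDelta mul b1 b2 R a
  · have hinj : Function.Injective (rSharpₗ R) := (injective_iff_map_eq_zero _).mpr hnondeg
    exact ⟨hinj, (LinearMap.injective_iff_surjective_of_finrank_eq_finrank
      Subspace.dual_finrank_eq).mp hinj⟩

/-- Let `R ∈ A ⊗ A` be a symmetric solution of the S-equation in a finite-dimensional
perm algebra `A`, and `Δ(a) = (κl(a) ⊗ id + id ⊗ κl(a) − id ⊗ κr(a))(R)`.  Then the
induced perm algebra structure on `A*` (via `Δ*`) is
`b₁b₂ = κr*(R♯(b₂))(b₁) + κr*(R♯(b₁))(b₂) − κl*(R♯(b₁))(b₂)`, the map `R♯ : A* → A` is a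
morphism of perm algebras, and if `R` is nondegenerate then `R♯` is an isomorphism of
perm algebras. -/
theorem coboundary_bialgebra_structure {k A : Type*} [Field k] [AddCommGroup A] [Module k A]
    [FiniteDimensional k A]
    (mul : A →ₗ[k] A →ₗ[k] A)
    (hp1 : ∀ x y z, mul (mul x y) z = mul x (mul y z))
    (hp2 : ∀ x y z, mul x (mul y z) = mul x (mul z y))
    (R : A ⊗[k] A)
    (hsym : (TensorProduct.comm k A A) R = R)
    (hS : sTensor mul R = 0) :
    -- (i) the perm structure on A* induced by Δ is given by the stated formula
    (∀ (b1 b2 : Module.Dual k A) (a : A),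
      (TensorProduct.lid k k) ((TensorProduct.map b1 b2) (coboundaryDelta mul R a)) =
        ((mul.flip (rSharp R b2)).dualMap b1 + (mul.flip (rSharp R b1)).dualMap b2 -
          (mul (rSharp R b1)).dualMap b2) a) ∧
    -- (ii) R♯ is a morphism of perm algebras
    (∀ b1 b2 : Module.Dual k A,
      rSharp R ((mul.flip (rSharp R b2)).dualMap b1 + (mul.flip (rSharp R b1)).dualMap b2 -
          (mul (rSharp R b1)).dualMap b2) =
        mul (rSharp R b1) (rSharp R b2)) ∧
    -- and if R is nondegenerate, R♯ is an isomorphism of perm algebras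
    ((∀ u : Module.Dual k A, rSharp R u = 0 → u = 0) → Function.Bijective (rSharp R)) :=
  coboundary_bialgebra_structure_general mul R hsym hS
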